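/- For any positive root γ, the lattice I⟨≽γ⟩ = {ν ∈ Δ⁺ : ν ≽ γ} is modular; equivalently, for all η₁, η₂ ∈ I⟨≽γ⟩, ht(η₁ ∨ η₂) + ht(η₁ ∧ η₂) = ht(η₁) + ht(η₂), where ht is the height of a root. -/

import Mathlib

open scoped RealInnerProductSpace

/-- Combinatorial data of the set of positive roots of a (reduced, irreducible,
crystallographic) root system of a simple Lie algebra, with a chosen set of
simple roots, sitting in a real inner product space `V`. -/
structure SimpleRS (V : Type*) [NormedAddCommGroup V] [InnerProductSpace ℝ V] where
  /-- the positive roots Δ⁺ -/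
  pos : Finset V
  /-- the simple roots Π -/
  simple : Finset V
  simple_sub : simple ⊆ pos
  indep : LinearIndependent ℝ (fun α : {x // x ∈ simple} => (α : V))
  root_ne : ∀ γ ∈ pos, γ ≠ (0 : V)
  /-- `coeff γ α` is the coefficient of the simple root `α` in `γ` -/
  coeff : V → V → ℕ
  coeff_spec : ∀ γ ∈ pos, γ = ∑ α ∈ simple, (coeff γ α : ℝ) • α
  /-- the reflection of a root in a root is again a root (positive or negative) -/
  reflect_mem : ∀ α ∈ pos, ∀ γ ∈ pos,
    (γ - (2 * ⟪γ, α⟫ / ⟪α, α⟫) • α ∈ pos ∨ -(γ - (2 * ⟪γ, α⟫ / ⟪α, α⟫) • α) ∈ pos)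
  crystallographic : ∀ α ∈ pos, ∀ γ ∈ pos, ∃ z : ℤ, 2 * ⟪γ, α⟫ / ⟪α, α⟫ = (z : ℝ)
  reduced : ∀ α ∈ pos, (2 : ℝ) • α ∉ pos
  /-- irreducibility: the Dynkin diagram is connected -/
  irreducible : ∀ S ⊆ simple, (∀ α ∈ S, ∀ β ∈ simple, β ∉ S → ⟪α, β⟫ = 0) →
      S = ∅ ∨ S = simple
  /-- the highest root θ -/
  highest : V
  highest_mem : highest ∈ pos
  highest_spec : ∀ γ ∈ pos, ∃ c : V → ℕ, highest - γ = ∑ α ∈ simple, (c α : ℝ) • α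

namespace SimpleRS

variable {V : Type*} [NormedAddCommGroup V] [InnerProductSpace ℝ V] (R : SimpleRS V)

/-- the root order: `μ ≼ ν` iff `ν − μ` is a nonnegative integral combination
of simple roots -/
def rle (μ ν : V) : Prop := ∃ c : V → ℕ, ν - μ = ∑ α ∈ R.simple, (c α : ℝ) • α

/-- the support of a root: simple roots occurring with nonzero coefficient -/
def supp (γ : V) : Set V := {α | α ∈ R.simple ∧ R.coeff γ α ≠ 0}

/-- the height of a root -/
def ht (γ : V) : ℕ := ∑ α ∈ R.simple, R.coeff γ α

/-- the root system is of type `A_n`: its Dynkin diagram is a simply laced chain -/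
def IsTypeA : Prop :=
  ∃ (n : ℕ) (e : Fin n ≃ {x // x ∈ R.simple}),
    (∀ i j : Fin n, ⟪(e i : V), (e j : V)⟫ ≠ 0 ↔ ((i : ℤ) - (j : ℤ)).natAbs ≤ 1) ∧
    (∀ i j : Fin n, ‖(e i : V)‖ = ‖(e j : V)‖)

/-- all roots have the same length -/
def SimplyLaced : Prop := ∀ α ∈ R.pos, ∀ β ∈ R.pos, ‖α‖ = ‖β‖

/-- a positive root `γ` is commutative if the upper ideal it generates is abelian,
i.e. no two of its elements sum to a root -/
def IsCom (γ : V) : Prop :=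
  ∀ ν₁ ∈ R.pos, ∀ ν₂ ∈ R.pos, R.rle γ ν₁ → R.rle γ ν₂ →
    ν₁ + ν₂ ∉ R.pos ∧ -(ν₁ + ν₂) ∉ R.pos

/-- the coefficientwise floor `⌊θ/2⌋` of half the highest root -/
def floorTheta : V := ∑ α ∈ R.simple, ((R.coeff R.highest α / 2 : ℕ) : ℝ) • α

end SimpleRS

/-!
Inside `I⟨≽γ⟩` the join and meet are the coefficientwise maximum and minimum of the coordinates
in the simple roots, so the height identity is `max a b + min a b = a + b` summed over the simple
roots. To see that the coefficientwise maximum of two incomparable roots `μ, ν ≽ γ` is a root, move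
one of them towards the other by a simple root `β` without changing the maximum: some `β` on
which `μ` lags behind `ν` has `⟪β, μ⟫ < 0`, so that `μ + β` is a root (or symmetrically). Otherwise,
writing `μ = p + P`, `ν = p + N` with `p` the coefficientwise minimum and `P`, `N` disjointly
supported, `⟪μ, ν⟫ = ⟪p, p⟫ + ⟪μ, N⟫ + ⟪P, ν⟫ - ⟪P, N⟫ > 0` because `p ≥ γ` is nonzero, whereas
incomparable roots have `⟪μ, ν⟫ ≤ 0`. The minimum is dual, with `⟪q, q⟫ > 0` for the
coefficientwise maximum `q = μ + N = ν + P`.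
-/

namespace SimpleRS

variable {V : Type*} [NormedAddCommGroup V] [InnerProductSpace ℝ V]

/-- The Cartan integer `⟨x, y^∨⟩`. -/
noncomputable def cartan (x y : V) : ℝ := 2 * ⟪x, y⟫ / ⟪y, y⟫

lemma cartan_mul_cartan_lt_four {x y : V} (hx : x ≠ 0) (hy : y ≠ 0)
    (hxy : ∀ r : ℝ, y ≠ r • x) : cartan x y * cartan y x < 4 := by
  have hCS : |⟪x, y⟫| < ‖x‖ * ‖y‖ := by
    refine lt_of_le_of_ne (abs_real_inner_le_norm x y) fun h => ?_
    obtain ⟨r, -, hr⟩ := (norm_inner_eq_norm_iff (𝕜 := ℝ) hx hy).1 h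
    exact hxy r hr
  have hxx : 0 < ⟪x, x⟫ := real_inner_self_pos.2 hx
  have hyy : 0 < ⟪y, y⟫ := real_inner_self_pos.2 hy
  have hsq : ⟪x, y⟫ * ⟪x, y⟫ < ⟪x, x⟫ * ⟪y, y⟫ := by
    rw [real_inner_self_eq_norm_mul_norm, real_inner_self_eq_norm_mul_norm]
    nlinarith [abs_mul_abs_self ⟪x, y⟫, abs_nonneg ⟪x, y⟫]
  rw [cartan, cartan, real_inner_comm x y, div_mul_div_comm, div_lt_iff₀ (by positivity)]
  nlinarith

lemma cartan_pos {x y : V} (h : 0 < ⟪x, y⟫) : 0 < cartan x y :=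
  div_pos (by linarith) (real_inner_self_pos.2 fun hy => by simp [hy] at h)

lemma cartan_neg {x y : V} (h : ⟪x, y⟫ < 0) : cartan x y < 0 :=
  div_neg_of_neg_of_pos (by linarith) (real_inner_self_pos.2 fun hy => by simp [hy] at h)

variable (R : SimpleRS V)

def comb : (V → ℝ) →ₗ[ℝ] V := ∑ α ∈ R.simple, (LinearMap.proj α).smulRight α

lemma comb_apply (f : V → ℝ) : R.comb f = ∑ α ∈ R.simple, f α • α := by
  simp [comb]

lemma eq_of_comb_eq {f g : V → ℝ} (h : R.comb f = R.comb g) : ∀ α ∈ R.simple, f α = g α := by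
  rw [comb_apply, comb_apply] at h
  have hind : LinearIndepOn ℝ id (R.simple : Set V) := R.indep
  exact linearIndepOn_finset_iffₛ.1 hind f g h

lemma comb_congr {f g : V → ℝ} (h : ∀ α ∈ R.simple, f α = g α) : R.comb f = R.comb g := by
  rw [comb_apply, comb_apply]
  exact Finset.sum_congr rfl fun α hα => by rw [h α hα]

lemma comb_coeff {x : V} (hx : x ∈ R.pos) : R.comb (fun α => (R.coeff x α : ℝ)) = x :=
  (R.comb_apply _).trans (R.coeff_spec x hx).symm

lemma coeff_eq_of_comb_eq {x : V} (hx : x ∈ R.pos) {f : V → ℝ} (h : R.comb f = x) :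
    ∀ α ∈ R.simple, (R.coeff x α : ℝ) = f α :=
  R.eq_of_comb_eq ((R.comb_coeff hx).trans h.symm)

lemma eq_of_coeff_eq {x y : V} (hx : x ∈ R.pos) (hy : y ∈ R.pos)
    (h : ∀ α ∈ R.simple, R.coeff x α = R.coeff y α) : x = y := by
  rw [← R.comb_coeff hx, ← R.comb_coeff hy]
  exact R.comb_congr fun α hα => by rw [h α hα]

lemma exists_coeff_pos {x : V} (hx : x ∈ R.pos) : ∃ α ∈ R.simple, 0 < R.coeff x α := by
  by_contra! h
  apply R.root_ne x hx
  rw [← R.comb_coeff hx, ← map_zero R.comb]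
  exact R.comb_congr fun α hα => by simp [Nat.le_zero.1 (h α hα)]

lemma comb_nat_ne_zero {c : V → ℕ} {β : V} (hβ : β ∈ R.simple) (hc : 0 < c β) :
    R.comb (fun α => (c α : ℝ)) ≠ 0 := by
  intro h
  have := R.eq_of_comb_eq (h.trans (map_zero R.comb).symm) β hβ
  simp only [Pi.zero_apply, Nat.cast_eq_zero] at this
  omega

lemma coeff_add {x y : V} (hx : x ∈ R.pos) (hy : y ∈ R.pos) (hxy : x + y ∈ R.pos) :
    ∀ α ∈ R.simple, R.coeff (x + y) α = R.coeff x α + R.coeff y α := by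
  intro α hα
  have := R.coeff_eq_of_comb_eq hxy
    (f := (fun α => (R.coeff x α : ℝ)) + fun α => (R.coeff y α : ℝ))
    (by rw [map_add, R.comb_coeff hx, R.comb_coeff hy]) α hα
  simp only [Pi.add_apply] at this
  exact_mod_cast this

lemma comb_single [DecidableEq V] {β : V} (hβ : β ∈ R.simple) : R.comb (Pi.single β 1) = β := by
  rw [comb_apply, Finset.sum_eq_single_of_mem β hβ fun α _ hne => by simp [hne]]
  simp

lemma coeff_simple_self {β : V} (hβ : β ∈ R.simple) : R.coeff β β = 1 := by
  classical
  simpa using R.coeff_eq_of_comb_eq (R.simple_sub hβ) (R.comb_single hβ) β hβ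

lemma coeff_simple_of_ne {α β : V} (hα : α ∈ R.simple) (hβ : β ∈ R.simple) (hne : α ≠ β) :
    R.coeff β α = 0 := by
  classical
  simpa [hne] using R.coeff_eq_of_comb_eq (R.simple_sub hβ) (R.comb_single hβ) α hα

lemma rle_iff {μ ν : V} (hμ : μ ∈ R.pos) (hν : ν ∈ R.pos) :
    R.rle μ ν ↔ ∀ α ∈ R.simple, R.coeff μ α ≤ R.coeff ν α := by
  constructor
  · rintro ⟨c, hc⟩ α hα
    have := R.coeff_eq_of_comb_eq hν
      (f := (fun α => (R.coeff μ α : ℝ)) + fun α => (c α : ℝ)) (by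
        rw [map_add, R.comb_coeff hμ, comb_apply, ← hc, add_sub_cancel]) α hα
    simp only [Pi.add_apply] at this
    exact_mod_cast this.symm ▸ le_add_of_nonneg_right (Nat.cast_nonneg (c α))
  · intro h
    refine ⟨fun α => R.coeff ν α - R.coeff μ α, ?_⟩
    calc ν - μ = R.comb ((fun α => (R.coeff ν α : ℝ)) - fun α => (R.coeff μ α : ℝ)) := by
          rw [map_sub, R.comb_coeff hν, R.comb_coeff hμ]
      _ = _ := by
          rw [comb_apply]
          exact Finset.sum_congr rfl fun α hα => by simp [Nat.cast_sub (h α hα)]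

lemma rle_of_sub_mem {μ ν : V} (h : ν - μ ∈ R.pos) : R.rle μ ν :=
  ⟨R.coeff (ν - μ), R.coeff_spec _ h⟩

lemma eq_of_rle_simple {μ β : V} (hμ : μ ∈ R.pos) (hβ : β ∈ R.simple) (h : R.rle μ β) :
    μ = β := by
  have hle := (R.rle_iff hμ (R.simple_sub hβ)).1 h
  have hzero : ∀ α ∈ R.simple, α ≠ β → R.coeff μ α = 0 := fun α hα hne => by
    simpa [R.coeff_simple_of_ne hα hβ hne] using hle α hα
  obtain ⟨α, hα, hpos⟩ := R.exists_coeff_pos hμ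
  obtain rfl : α = β := by_contra fun hne => (hzero α hα hne ▸ hpos).false
  refine R.eq_of_coeff_eq hμ (R.simple_sub hβ) fun δ hδ => ?_
  rcases eq_or_ne δ α with rfl | hne
  · have := hle δ hδ
    rw [R.coeff_simple_self hβ] at this ⊢
    omega
  · rw [hzero δ hδ hne, R.coeff_simple_of_ne hδ hβ hne]

lemma exists_int_cartan {x y : V} (hx : x ∈ R.pos) (hy : y ∈ R.pos) :
    ∃ z : ℤ, cartan x y = z :=
  R.crystallographic y hy x hx

lemma sub_cartan_smul_mem {x y : V} (hx : x ∈ R.pos) (hy : y ∈ R.pos) :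
    x - cartan x y • y ∈ R.pos ∨ -(x - cartan x y • y) ∈ R.pos :=
  R.reflect_mem y hy x hx

/-- The Cartan integers of `μ` and `t • μ` are `2 * t` and `2 / t`; reducedness excludes
`t = 1 / 2` and `t = 2`. -/
lemma eq_one_of_smul_mem {μ : V} {t : ℝ} (hμ : μ ∈ R.pos) (htμ : t • μ ∈ R.pos) : t = 1 := by
  have ht : 0 < t := by
    obtain ⟨α, hα, hpos⟩ := R.exists_coeff_pos hμ
    have hcoeff := R.coeff_eq_of_comb_eq htμ (f := t • fun α => (R.coeff μ α : ℝ))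
      (by rw [map_smul, R.comb_coeff hμ]) α hα
    have hpos' : (0 : ℝ) < R.coeff μ α := by exact_mod_cast hpos
    have hne : t ≠ 0 := by rintro rfl; exact R.root_ne _ htμ (zero_smul ℝ μ)
    simp only [Pi.smul_apply, smul_eq_mul] at hcoeff
    rcases lt_or_gt_of_ne hne with hneg | hpos
    · nlinarith [(R.coeff (t • μ) α).cast_nonneg (α := ℝ)]
    · exact hpos
  have hμμ : 0 < ⟪μ, μ⟫ := real_inner_self_pos.2 (R.root_ne μ hμ)
  obtain ⟨z, hz⟩ := R.exists_int_cartan htμ hμ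
  obtain ⟨w, hw⟩ := R.exists_int_cartan hμ htμ
  simp only [cartan, real_inner_smul_left, real_inner_smul_right] at hz hw
  have hzt : (z : ℝ) = 2 * t := by rw [← hz]; field_simp
  have hwt : (w : ℝ) * t = 2 := by rw [← hw]; field_simp
  have hzw : z * w = 4 := by
    have : (z : ℝ) * w = 4 := by rw [hzt]; linear_combination 2 * hwt
    exact_mod_cast this
  have hz0 : 0 < z := by exact_mod_cast hzt ▸ (by positivity : (0 : ℝ) < 2 * t)
  have hz4 : z ≤ 4 := Int.le_of_dvd (by norm_num) ⟨w, hzw.symm⟩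
  interval_cases z <;> push_cast at hzt
  · refine absurd ?_ (R.reduced _ htμ)
    rwa [smul_smul, ← hzt, one_smul]
  · linarith
  · omega
  · refine absurd ?_ (R.reduced _ hμ)
    rwa [show (2 : ℝ) = t by linarith]

lemma cartan_mul_cartan_lt_four_of_ne {μ ν : V} (hμ : μ ∈ R.pos) (hν : ν ∈ R.pos)
    (hne : μ ≠ ν) : cartan μ ν * cartan ν μ < 4 :=
  cartan_mul_cartan_lt_four (R.root_ne μ hμ) (R.root_ne ν hν) fun r hr => hne <| by
    rw [hr, R.eq_one_of_smul_mem (t := r) hμ (hr ▸ hν), one_smul]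

lemma cartan_eq_one_or_of_inner_pos {μ ν : V} (hμ : μ ∈ R.pos) (hν : ν ∈ R.pos)
    (hne : μ ≠ ν) (h : 0 < ⟪μ, ν⟫) : cartan μ ν = 1 ∨ cartan ν μ = 1 := by
  obtain ⟨z, hz⟩ := R.exists_int_cartan hμ hν
  obtain ⟨w, hw⟩ := R.exists_int_cartan hν hμ
  have hz0 : 0 < z := by exact_mod_cast hz ▸ cartan_pos h
  have hw0 : 0 < w := by exact_mod_cast hw ▸ cartan_pos (by rwa [real_inner_comm])
  have hzw : z * w < 4 := by
    exact_mod_cast hz ▸ hw ▸ R.cartan_mul_cartan_lt_four_of_ne hμ hν hne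
  rw [hz, hw]
  by_contra! hc
  have : 2 ≤ z := by norm_cast at hc; omega
  have : 2 ≤ w := by norm_cast at hc; omega
  nlinarith

lemma cartan_eq_neg_one_or_of_inner_neg {μ ν : V} (hμ : μ ∈ R.pos) (hν : ν ∈ R.pos)
    (h : ⟪μ, ν⟫ < 0) : cartan μ ν = -1 ∨ cartan ν μ = -1 := by
  obtain ⟨z, hz⟩ := R.exists_int_cartan hμ hν
  obtain ⟨w, hw⟩ := R.exists_int_cartan hν hμ
  have hne : μ ≠ ν := by
    rintro rfl
    exact (real_inner_self_pos.2 (R.root_ne μ hμ)).not_gt h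
  have hz0 : z < 0 := by exact_mod_cast hz ▸ cartan_neg h
  have hw0 : w < 0 := by exact_mod_cast hw ▸ cartan_neg (by rwa [real_inner_comm])
  have hzw : z * w < 4 := by
    exact_mod_cast hz ▸ hw ▸ R.cartan_mul_cartan_lt_four_of_ne hμ hν hne
  rw [hz, hw]
  by_contra! hc
  have : z ≤ -2 := by norm_cast at hc; omega
  have : w ≤ -2 := by norm_cast at hc; omega
  nlinarith

lemma neg_add_not_mem {μ ν : V} (hμ : μ ∈ R.pos) (hν : ν ∈ R.pos) : -(μ + ν) ∉ R.pos := by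
  intro hρ
  obtain ⟨α, hα, hpos⟩ := R.exists_coeff_pos hμ
  have hcoeff := R.coeff_eq_of_comb_eq hρ
    (f := -((fun α => (R.coeff μ α : ℝ)) + fun α => (R.coeff ν α : ℝ)))
    (by rw [map_neg, map_add, R.comb_coeff hμ, R.comb_coeff hν]) α hα
  simp only [Pi.neg_apply, Pi.add_apply] at hcoeff
  have : (0 : ℝ) < R.coeff μ α := by exact_mod_cast hpos
  linarith [(R.coeff (-(μ + ν)) α).cast_nonneg (α := ℝ), (R.coeff ν α).cast_nonneg (α := ℝ)]

lemma add_mem_of_inner_neg {μ ν : V} (hμ : μ ∈ R.pos) (hν : ν ∈ R.pos) (h : ⟪μ, ν⟫ < 0) :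
    μ + ν ∈ R.pos := by
  rcases R.cartan_eq_neg_one_or_of_inner_neg hμ hν h with hc | hc
  · have := R.sub_cartan_smul_mem hμ hν
    rw [hc, neg_one_smul, sub_neg_eq_add] at this
    exact this.resolve_right (R.neg_add_not_mem hμ hν)
  · have := R.sub_cartan_smul_mem hν hμ
    rw [hc, neg_one_smul, sub_neg_eq_add, add_comm] at this
    exact this.resolve_right (R.neg_add_not_mem hμ hν)

lemma sub_mem_or_sub_mem_of_inner_pos {μ ν : V} (hμ : μ ∈ R.pos) (hν : ν ∈ R.pos)
    (hne : μ ≠ ν) (h : 0 < ⟪μ, ν⟫) : μ - ν ∈ R.pos ∨ ν - μ ∈ R.pos := by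
  rcases R.cartan_eq_one_or_of_inner_pos hμ hν hne h with hc | hc
  · have := R.sub_cartan_smul_mem hμ hν
    rwa [hc, one_smul, neg_sub] at this
  · have := R.sub_cartan_smul_mem hν hμ
    rwa [hc, one_smul, neg_sub, or_comm] at this

lemma inner_simple_nonpos {α β : V} (hα : α ∈ R.simple) (hβ : β ∈ R.simple) (hne : α ≠ β) :
    ⟪α, β⟫ ≤ 0 := by
  by_contra! h
  rcases R.sub_mem_or_sub_mem_of_inner_pos (R.simple_sub hα) (R.simple_sub hβ) hne h with h' | h'
  · exact hne (R.eq_of_rle_simple (R.simple_sub hβ) hα (R.rle_of_sub_mem h')).symm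
  · exact hne (R.eq_of_rle_simple (R.simple_sub hα) hβ (R.rle_of_sub_mem h'))

lemma inner_nonpos_of_not_rle {μ ν : V} (hμ : μ ∈ R.pos) (hν : ν ∈ R.pos)
    (hμν : ¬ R.rle μ ν) (hνμ : ¬ R.rle ν μ) : ⟪μ, ν⟫ ≤ 0 := by
  by_contra! h
  have hne : μ ≠ ν := by rintro rfl; exact hμν ⟨0, by simp⟩
  rcases R.sub_mem_or_sub_mem_of_inner_pos hμ hν hne h with h' | h'
  · exact hνμ (R.rle_of_sub_mem h')
  · exact hμν (R.rle_of_sub_mem h')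

lemma comb_nat_eq_add {c d e : V → ℕ} (h : ∀ α ∈ R.simple, e α = c α + d α) :
    R.comb (fun α => (e α : ℝ)) = R.comb (fun α => (c α : ℝ)) + R.comb (fun α => (d α : ℝ)) := by
  rw [← map_add]
  exact R.comb_congr fun α hα => by simp [h α hα]

lemma inner_comb_left (f : V → ℝ) (x : V) :
    ⟪R.comb f, x⟫ = ∑ α ∈ R.simple, f α * ⟪α, x⟫ := by
  simp only [comb_apply, sum_inner, real_inner_smul_left]

lemma inner_comb_nonneg {c : V → ℕ} {x : V} (h : ∀ α ∈ R.simple, 0 < c α → 0 ≤ ⟪α, x⟫) :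
    0 ≤ ⟪R.comb (fun α => (c α : ℝ)), x⟫ := by
  rw [inner_comb_left]
  refine Finset.sum_nonneg fun α hα => ?_
  rcases (c α).eq_zero_or_pos with h0 | h0
  · simp [h0]
  · exact mul_nonneg (Nat.cast_nonneg _) (h α hα h0)

lemma inner_comb_nonpos {c : V → ℕ} {x : V} (h : ∀ α ∈ R.simple, 0 < c α → ⟪α, x⟫ ≤ 0) :
    ⟪R.comb (fun α => (c α : ℝ)), x⟫ ≤ 0 := by
  rw [inner_comb_left]
  refine Finset.sum_nonpos fun α hα => ?_
  rcases (c α).eq_zero_or_pos with h0 | h0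
  · simp [h0]
  · exact mul_nonpos_of_nonneg_of_nonpos (Nat.cast_nonneg _) (h α hα h0)

lemma inner_comb_nonpos_of_disjoint {c d : V → ℕ} (h : ∀ α ∈ R.simple, c α = 0 ∨ d α = 0) :
    ⟪R.comb (fun α => (c α : ℝ)), R.comb (fun α => (d α : ℝ))⟫ ≤ 0 :=
  R.inner_comb_nonpos fun α hα hc => by
    rw [real_inner_comm]
    exact R.inner_comb_nonpos fun β hβ hd => R.inner_simple_nonpos hβ hα <| by
      rintro rfl
      rcases h β hβ with h0 | h0 <;> omega

lemma rle_trans {a b c : V} (hab : R.rle a b) (hbc : R.rle b c) : R.rle a c := by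
  obtain ⟨f, hf⟩ := hab
  obtain ⟨g, hg⟩ := hbc
  refine ⟨f + g, ?_⟩
  rw [← sub_add_sub_cancel c b a, hf, hg, ← Finset.sum_add_distrib]
  simp only [Pi.add_apply, Nat.cast_add, add_smul, add_comm]

lemma rle_antisymm {μ ν : V} (hμ : μ ∈ R.pos) (hν : ν ∈ R.pos) (hμν : R.rle μ ν)
    (hνμ : R.rle ν μ) : μ = ν :=
  R.eq_of_coeff_eq hμ hν fun α hα =>
    le_antisymm ((R.rle_iff hμ hν).1 hμν α hα) ((R.rle_iff hν hμ).1 hνμ α hα)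

lemma coeff_add_simple {μ β : V} (hμ : μ ∈ R.pos) (hβ : β ∈ R.simple) (h : μ + β ∈ R.pos) :
    R.coeff (μ + β) β = R.coeff μ β + 1 ∧
      ∀ α ∈ R.simple, α ≠ β → R.coeff (μ + β) α = R.coeff μ α := by
  have hc := R.coeff_add hμ (R.simple_sub hβ) h
  refine ⟨by rw [hc β hβ, R.coeff_simple_self hβ], fun α hα hne => ?_⟩
  rw [hc α hα, R.coeff_simple_of_ne hα hβ hne, add_zero]

lemma coeff_sub_simple {μ β : V} (hμ : μ ∈ R.pos) (hβ : β ∈ R.simple) (h : μ - β ∈ R.pos) :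
    R.coeff (μ - β) β + 1 = R.coeff μ β ∧
      ∀ α ∈ R.simple, α ≠ β → R.coeff (μ - β) α = R.coeff μ α := by
  have := R.coeff_add_simple h hβ (by rwa [sub_add_cancel])
  rw [sub_add_cancel] at this
  exact ⟨this.1.symm, fun α hα hne => (this.2 α hα hne).symm⟩

/-- The paper's `I⟨≽γ⟩`. -/
def Ici (γ : V) : Set V := {x | x ∈ R.pos ∧ R.rle γ x}

lemma add_simple_mem_Ici {γ μ β : V} (hμ : μ ∈ R.Ici γ) (hβ : β ∈ R.simple)
    (h : ⟪β, μ⟫ < 0) : μ + β ∈ R.Ici γ :=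
  ⟨R.add_mem_of_inner_neg hμ.1 (R.simple_sub hβ) (by rwa [real_inner_comm]),
    R.rle_trans hμ.2 (R.rle_of_sub_mem (by rw [add_sub_cancel_left]; exact R.simple_sub hβ))⟩

lemma sub_simple_mem_Ici {γ μ ν β : V} (hγ : γ ∈ R.pos) (hμ : μ ∈ R.Ici γ) (hν : ν ∈ R.Ici γ)
    (hβ : β ∈ R.simple) (hlt : R.coeff ν β < R.coeff μ β) (h : 0 < ⟪β, μ⟫) :
    μ - β ∈ R.Ici γ := by
  have hγν := (R.rle_iff hγ hν.1).1 hν.2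
  have hμβ : ¬ R.rle μ β := fun hμβ => by
    obtain rfl := R.eq_of_rle_simple hμ.1 hβ hμβ
    obtain rfl := R.eq_of_rle_simple hγ hβ hμ.2
    exact (hγν γ hβ).not_gt hlt
  have hsub : μ - β ∈ R.pos := by
    have hne : β ≠ μ := fun h => hμβ (h ▸ ⟨0, by simp⟩)
    refine (R.sub_mem_or_sub_mem_of_inner_pos (R.simple_sub hβ) hμ.1 hne h).resolve_left ?_
    exact fun h' => hμβ (R.rle_of_sub_mem h')
  obtain ⟨hself, hother⟩ := R.coeff_sub_simple hμ.1 hβ hsub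
  refine ⟨hsub, (R.rle_iff hγ hsub).2 fun α hα => ?_⟩
  rcases eq_or_ne α β with rfl | hne
  · have := hγν α hα
    omega
  · rw [hother α hα hne]
    exact (R.rle_iff hγ hμ.1).1 hμ.2 α hα

def sup (μ ν : V) : V := R.comb fun α => ((max (R.coeff μ α) (R.coeff ν α) : ℕ) : ℝ)

def inf (μ ν : V) : V := R.comb fun α => ((min (R.coeff μ α) (R.coeff ν α) : ℕ) : ℝ)

def cdist (μ ν : V) : ℕ :=
  ∑ α ∈ R.simple, (R.coeff μ α - R.coeff ν α + (R.coeff ν α - R.coeff μ α))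

lemma sup_comm (μ ν : V) : R.sup μ ν = R.sup ν μ := by
  simp only [sup, max_comm]

lemma inf_comm (μ ν : V) : R.inf μ ν = R.inf ν μ := by
  simp only [inf, min_comm]

lemma cdist_comm (μ ν : V) : R.cdist μ ν = R.cdist ν μ := by
  simp only [cdist, add_comm]

lemma sup_eq_right {μ ν : V} (hμ : μ ∈ R.pos) (hν : ν ∈ R.pos) (h : R.rle μ ν) :
    R.sup μ ν = ν := by
  conv_rhs => rw [← R.comb_coeff hν]
  exact R.comb_congr fun α hα => by rw [max_eq_right ((R.rle_iff hμ hν).1 h α hα)]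

lemma inf_eq_left {μ ν : V} (hμ : μ ∈ R.pos) (hν : ν ∈ R.pos) (h : R.rle μ ν) :
    R.inf μ ν = μ := by
  conv_rhs => rw [← R.comb_coeff hμ]
  exact R.comb_congr fun α hα => by rw [min_eq_left ((R.rle_iff hμ hν).1 h α hα)]

lemma cdist_lt_of_step {μ μ' ν β : V} (hβ : β ∈ R.simple)
    (hother : ∀ α ∈ R.simple, α ≠ β → R.coeff μ' α = R.coeff μ α)
    (hlt : R.coeff μ' β - R.coeff ν β + (R.coeff ν β - R.coeff μ' β) <
      R.coeff μ β - R.coeff ν β + (R.coeff ν β - R.coeff μ β)) :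
    R.cdist μ' ν < R.cdist μ ν := by
  refine Finset.sum_lt_sum (fun α hα => ?_) ⟨β, hβ, hlt⟩
  rcases eq_or_ne α β with rfl | hne
  · exact hlt.le
  · rw [hother α hα hne]

def excess (μ ν : V) : V := R.comb fun α => ((R.coeff μ α - R.coeff ν α : ℕ) : ℝ)

lemma inf_add_excess_left {μ : V} (hμ : μ ∈ R.pos) (ν : V) : R.inf μ ν + R.excess μ ν = μ := by
  rw [inf, excess, ← R.comb_nat_eq_add (e := R.coeff μ) fun α _ => by omega, R.comb_coeff hμ]

lemma inf_add_excess_right {ν : V} (hν : ν ∈ R.pos) (μ : V) : R.inf μ ν + R.excess ν μ = ν := by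
  rw [inf_comm, R.inf_add_excess_left hν]

lemma add_excess_eq_sup_left {μ : V} (hμ : μ ∈ R.pos) (ν : V) :
    μ + R.excess ν μ = R.sup μ ν := by
  rw [sup, excess, R.comb_nat_eq_add (e := fun α => max (R.coeff μ α) (R.coeff ν α))
    (c := R.coeff μ) (d := fun α => R.coeff ν α - R.coeff μ α) fun α _ => by omega,
    R.comb_coeff hμ]

lemma add_excess_eq_sup_right {ν : V} (hν : ν ∈ R.pos) (μ : V) :
    ν + R.excess μ ν = R.sup μ ν := by
  rw [sup_comm, R.add_excess_eq_sup_left hν]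

lemma inner_excess_excess_nonpos (μ ν : V) : ⟪R.excess μ ν, R.excess ν μ⟫ ≤ 0 :=
  R.inner_comb_nonpos_of_disjoint fun α _ => by omega

lemma exists_sup_step {γ μ ν : V} (hγ : γ ∈ R.pos) (hμ : μ ∈ R.Ici γ) (hν : ν ∈ R.Ici γ)
    (hμν : ¬ R.rle μ ν) (hνμ : ¬ R.rle ν μ) :
    ∃ β ∈ R.simple, (R.coeff μ β < R.coeff ν β ∧ ⟪β, μ⟫ < 0) ∨
      (R.coeff ν β < R.coeff μ β ∧ ⟪β, ν⟫ < 0) := by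
  by_contra! h
  have hinf : 0 < ⟪R.inf μ ν, R.inf μ ν⟫ := by
    obtain ⟨α, hα, hpos⟩ := R.exists_coeff_pos hγ
    have hγμ := (R.rle_iff hγ hμ.1).1 hμ.2 α hα
    have hγν := (R.rle_iff hγ hν.1).1 hν.2 α hα
    exact real_inner_self_pos.2 (R.comb_nat_ne_zero hα (by omega))
  have hμN : 0 ≤ ⟪μ, R.excess ν μ⟫ := by
    rw [real_inner_comm]
    exact R.inner_comb_nonneg fun α hα hα' => (h α hα).1 (by omega)
  have hPν : 0 ≤ ⟪R.excess μ ν, ν⟫ := R.inner_comb_nonneg fun α hα hα' => (h α hα).2 (by omega)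
  have hinner : ⟪μ, ν⟫ = ⟪R.inf μ ν, R.inf μ ν⟫ + ⟪μ, R.excess ν μ⟫ + ⟪R.excess μ ν, ν⟫ -
      ⟪R.excess μ ν, R.excess ν μ⟫ := by
    set p := R.inf μ ν
    set P := R.excess μ ν
    set N := R.excess ν μ
    calc ⟪μ, ν⟫ = ⟪p + P, p + N⟫ := by rw [R.inf_add_excess_left hμ.1, R.inf_add_excess_right hν.1]
      _ = ⟪p, p⟫ + ⟪p + P, N⟫ + ⟪P, p + N⟫ - ⟪P, N⟫ := by
        simp only [inner_add_left, inner_add_right]; ring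
      _ = _ := by rw [R.inf_add_excess_left hμ.1, R.inf_add_excess_right hν.1]
  linarith [R.inner_nonpos_of_not_rle hμ.1 hν.1 hμν hνμ, R.inner_excess_excess_nonpos μ ν]

lemma exists_inf_step {μ ν : V} (hμ : μ ∈ R.pos) (hν : ν ∈ R.pos)
    (hμν : ¬ R.rle μ ν) (hνμ : ¬ R.rle ν μ) :
    ∃ β ∈ R.simple, (R.coeff ν β < R.coeff μ β ∧ 0 < ⟪β, μ⟫) ∨
      (R.coeff μ β < R.coeff ν β ∧ 0 < ⟪β, ν⟫) := by
  by_contra! h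
  have hsup : 0 < ⟪R.sup μ ν, R.sup μ ν⟫ := by
    obtain ⟨α, hα, hpos⟩ := R.exists_coeff_pos hμ
    exact real_inner_self_pos.2 (R.comb_nat_ne_zero hα (by omega))
  have hμP : ⟪μ, R.excess μ ν⟫ ≤ 0 := by
    rw [real_inner_comm]
    exact R.inner_comb_nonpos fun α hα hα' => (h α hα).1 (by omega)
  have hNν : ⟪R.excess ν μ, ν⟫ ≤ 0 := R.inner_comb_nonpos fun α hα hα' => (h α hα).2 (by omega)
  have hinner : ⟪R.sup μ ν, R.sup μ ν⟫ = ⟪μ, ν⟫ + ⟪μ, R.excess μ ν⟫ + ⟪R.excess ν μ, ν⟫ +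
      ⟪R.excess ν μ, R.excess μ ν⟫ := by
    nth_rw 1 [← R.add_excess_eq_sup_left hμ ν]
    rw [← R.add_excess_eq_sup_right hν μ]
    simp only [inner_add_left, inner_add_right]
    ring
  linarith [R.inner_nonpos_of_not_rle hμ hν hμν hνμ, R.inner_excess_excess_nonpos ν μ]

lemma sup_mem_pos {γ : V} (hγ : γ ∈ R.pos) {μ ν : V} (hμ : μ ∈ R.Ici γ) (hν : ν ∈ R.Ici γ) :
    R.sup μ ν ∈ R.pos := by
  induction hd : R.cdist μ ν using Nat.strong_induction_on generalizing μ ν with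
  | _ n ih =>
  by_cases hμν : R.rle μ ν
  · rw [R.sup_eq_right hμ.1 hν.1 hμν]; exact hν.1
  by_cases hνμ : R.rle ν μ
  · rw [R.sup_comm, R.sup_eq_right hν.1 hμ.1 hνμ]; exact hμ.1
  have step : ∀ {a b β : V}, a ∈ R.Ici γ → b ∈ R.Ici γ → R.cdist a b = n → β ∈ R.simple →
      R.coeff a β < R.coeff b β → ⟪β, a⟫ < 0 → R.sup a b ∈ R.pos := by
    intro a b β ha hb hab hβ hlt hneg
    have ha' := R.add_simple_mem_Ici ha hβ hneg
    obtain ⟨hself, hother⟩ := R.coeff_add_simple ha.1 hβ ha'.1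
    have hsup : R.sup (a + β) b = R.sup a b := R.comb_congr fun α hα => by
      rcases eq_or_ne α β with rfl | hne
      · rw [hself]; congr 1; omega
      · rw [hother α hα hne]
    exact hsup ▸ ih _ (hab ▸ R.cdist_lt_of_step hβ hother (by omega)) ha' hb rfl
  obtain ⟨β, hβ, ⟨hlt, hneg⟩ | ⟨hlt, hneg⟩⟩ := R.exists_sup_step hγ hμ hν hμν hνμ
  · exact step hμ hν hd hβ hlt hneg
  · exact R.sup_comm ν μ ▸ step hν hμ (R.cdist_comm ν μ ▸ hd) hβ hlt hneg

lemma inf_mem_pos {γ : V} (hγ : γ ∈ R.pos) {μ ν : V} (hμ : μ ∈ R.Ici γ) (hν : ν ∈ R.Ici γ) :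
    R.inf μ ν ∈ R.pos := by
  induction hd : R.cdist μ ν using Nat.strong_induction_on generalizing μ ν with
  | _ n ih =>
  by_cases hμν : R.rle μ ν
  · rw [R.inf_eq_left hμ.1 hν.1 hμν]; exact hμ.1
  by_cases hνμ : R.rle ν μ
  · rw [R.inf_comm, R.inf_eq_left hν.1 hμ.1 hνμ]; exact hν.1
  have step : ∀ {a b β : V}, a ∈ R.Ici γ → b ∈ R.Ici γ → R.cdist a b = n → β ∈ R.simple →
      R.coeff b β < R.coeff a β → 0 < ⟪β, a⟫ → R.inf a b ∈ R.pos := by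
    intro a b β ha hb hab hβ hlt hpos
    have ha' := R.sub_simple_mem_Ici hγ ha hb hβ hlt hpos
    obtain ⟨hself, hother⟩ := R.coeff_sub_simple ha.1 hβ ha'.1
    have hinf : R.inf (a - β) b = R.inf a b := R.comb_congr fun α hα => by
      rcases eq_or_ne α β with rfl | hne
      · congr 1; omega
      · rw [hother α hα hne]
    exact hinf ▸ ih _ (hab ▸ R.cdist_lt_of_step hβ hother (by omega)) ha' hb rfl
  obtain ⟨β, hβ, ⟨hlt, hpos⟩ | ⟨hlt, hpos⟩⟩ := R.exists_inf_step hμ.1 hν.1 hμν hνμ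
  · exact step hμ hν hd hβ hlt hpos
  · exact R.inf_comm ν μ ▸ step hν hμ (R.cdist_comm ν μ ▸ hd) hβ hlt hpos

lemma coeff_sup {μ ν : V} (h : R.sup μ ν ∈ R.pos) :
    ∀ α ∈ R.simple, R.coeff (R.sup μ ν) α = max (R.coeff μ α) (R.coeff ν α) := fun α hα => by
  exact_mod_cast R.coeff_eq_of_comb_eq h rfl α hα

lemma coeff_inf {μ ν : V} (h : R.inf μ ν ∈ R.pos) :
    ∀ α ∈ R.simple, R.coeff (R.inf μ ν) α = min (R.coeff μ α) (R.coeff ν α) := fun α hα => by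
  exact_mod_cast R.coeff_eq_of_comb_eq h rfl α hα

lemma eq_sup_of_isLeast {γ μ ν s : V} (hγ : γ ∈ R.pos) (hμ : μ ∈ R.Ici γ) (hν : ν ∈ R.Ici γ)
    (hs : s ∈ R.Ici γ) (hμs : R.rle μ s) (hνs : R.rle ν s)
    (hleast : ∀ t ∈ R.Ici γ, R.rle μ t → R.rle ν t → R.rle s t) : s = R.sup μ ν := by
  have hsup := R.sup_mem_pos hγ hμ hν
  have hμsup : R.rle μ (R.sup μ ν) := (R.rle_iff hμ.1 hsup).2 fun α hα => by
    rw [R.coeff_sup hsup α hα]; exact le_max_left _ _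
  have hνsup : R.rle ν (R.sup μ ν) := (R.rle_iff hν.1 hsup).2 fun α hα => by
    rw [R.coeff_sup hsup α hα]; exact le_max_right _ _
  refine R.rle_antisymm hs.1 hsup (hleast _ ⟨hsup, R.rle_trans hμ.2 hμsup⟩ hμsup hνsup) ?_
  refine (R.rle_iff hsup hs.1).2 fun α hα => ?_
  rw [R.coeff_sup hsup α hα]
  exact max_le ((R.rle_iff hμ.1 hs.1).1 hμs α hα) ((R.rle_iff hν.1 hs.1).1 hνs α hα)

lemma eq_inf_of_isGreatest {γ μ ν m : V} (hγ : γ ∈ R.pos) (hμ : μ ∈ R.Ici γ)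
    (hν : ν ∈ R.Ici γ) (hm : m ∈ R.Ici γ) (hmμ : R.rle m μ) (hmν : R.rle m ν)
    (hgreatest : ∀ t ∈ R.Ici γ, R.rle t μ → R.rle t ν → R.rle t m) : m = R.inf μ ν := by
  have hinf := R.inf_mem_pos hγ hμ hν
  have hinfμ : R.rle (R.inf μ ν) μ := (R.rle_iff hinf hμ.1).2 fun α hα => by
    rw [R.coeff_inf hinf α hα]; exact min_le_left _ _
  have hinfν : R.rle (R.inf μ ν) ν := (R.rle_iff hinf hν.1).2 fun α hα => by
    rw [R.coeff_inf hinf α hα]; exact min_le_right _ _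
  have hγinf : R.rle γ (R.inf μ ν) := (R.rle_iff hγ hinf).2 fun α hα => by
    rw [R.coeff_inf hinf α hα]
    exact le_min ((R.rle_iff hγ hμ.1).1 hμ.2 α hα) ((R.rle_iff hγ hν.1).1 hν.2 α hα)
  refine R.rle_antisymm hm.1 hinf ?_ (hgreatest _ ⟨hinf, hγinf⟩ hinfμ hinfν)
  refine (R.rle_iff hm.1 hinf).2 fun α hα => ?_
  rw [R.coeff_inf hinf α hα]
  exact le_min ((R.rle_iff hm.1 hμ.1).1 hmμ α hα) ((R.rle_iff hm.1 hν.1).1 hmν α hα)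

lemma ht_sup_add_ht_inf {μ ν : V} (hsup : R.sup μ ν ∈ R.pos) (hinf : R.inf μ ν ∈ R.pos) :
    R.ht (R.sup μ ν) + R.ht (R.inf μ ν) = R.ht μ + R.ht ν := by
  simp only [ht, ← Finset.sum_add_distrib]
  refine Finset.sum_congr rfl fun α hα => ?_
  rw [R.coeff_sup hsup α hα, R.coeff_inf hinf α hα, add_comm]
  exact min_add_max _ _

end SimpleRS

/-- the lattice `I⟨≽γ⟩` is modular: for all `η₁, η₂ ∈ I⟨≽γ⟩`, if `s`
is their join and `m` their meet inside `I⟨≽γ⟩`, then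
`ht(s) + ht(m) = ht(η₁) + ht(η₂)`. -/
theorem stmt5 {V : Type*} [NormedAddCommGroup V] [InnerProductSpace ℝ V]
    (R : SimpleRS V) {γ : V} (hγ : γ ∈ R.pos)
    {η₁ η₂ : V} (h1 : η₁ ∈ R.pos) (h2 : η₂ ∈ R.pos)
    (hg1 : R.rle γ η₁) (hg2 : R.rle γ η₂)
    {s : V} (hs : (s ∈ R.pos ∧ R.rle γ s) ∧ R.rle η₁ s ∧ R.rle η₂ s ∧
        ∀ t, (t ∈ R.pos ∧ R.rle γ t) → R.rle η₁ t → R.rle η₂ t → R.rle s t)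
    {m : V} (hm : (m ∈ R.pos ∧ R.rle γ m) ∧ R.rle m η₁ ∧ R.rle m η₂ ∧
        ∀ t, (t ∈ R.pos ∧ R.rle γ t) → R.rle t η₁ → R.rle t η₂ → R.rle t m) :
    R.ht s + R.ht m = R.ht η₁ + R.ht η₂ := by
  obtain ⟨hs_mem, hs₁, hs₂, hs_least⟩ := hs
  obtain ⟨hm_mem, hm₁, hm₂, hm_greatest⟩ := hm
  have hη₁ : η₁ ∈ R.Ici γ := ⟨h1, hg1⟩
  have hη₂ : η₂ ∈ R.Ici γ := ⟨h2, hg2⟩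
  rw [R.eq_sup_of_isLeast hγ hη₁ hη₂ hs_mem hs₁ hs₂ hs_least,
    R.eq_inf_of_isGreatest hγ hη₁ hη₂ hm_mem hm₁ hm₂ hm_greatest]
  exact R.ht_sup_add_ht_inf (R.sup_mem_pos hγ hη₁ hη₂) (R.inf_mem_pos hγ hη₁ hη₂)
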